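/- Fix K > 0 and j ∈ {1,2,3}, and let c̃, s̃ be the ultradiscrete elliptic functions. For every v ∈ ℝ, the two identities c̃(u+v) = max(c̃(u)+2s̃(v), 2s̃(u)+c̃(v)) − max(c̃(u)+s̃(u), c̃(v)+s̃(v)) and s̃(u+v) = max(s̃(u)+2c̃(v), 2c̃(u)+s̃(v)) − max(c̃(u)+s̃(u), c̃(v)+s̃(v)) hold for all u ∈ [(j−1)K, jK] if and only if (v − jK) mod 3K ∈ [0, 2K]. -/

import Mathlib

/-!
On `[0, 3K]` one has `c̃ u = max (K - 2u) (u - 2K)` and `s̃ u = max (K - u) (2u - 5K)`, and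
the pair of formulas is symmetric in `u, v` and `3K`-periodic in `v`. When `v` is congruent to a
point of the closure of a cell `D_k` with `k ≠ j`, the formulas reduce, piece by piece, to
identities between maxima of linear functions. When `v ≡ u'` with `u' ∈ D_j`, taking `u = u'`
turns them into the duplication formulas `c̃ (2u) = s̃ u`, `s̃ (2u) = c̃ u`, which fail on every
open cell.
-/

/-- The ultradiscrete elliptic function `c̃`. -/
noncomputable def ctilde (K u : ℝ) : ℝ :=
  -(9 * K / 2) * (Int.fract ((u - K) / (3 * K)) - 1 / 2) ^ 2
    + (9 * K / 2) * (Int.fract (u / (3 * K)) - 1 / 2) ^ 2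

/-- The ultradiscrete elliptic function `s̃`. -/
noncomputable def stilde (K u : ℝ) : ℝ :=
  -(9 * K / 2) * (Int.fract ((u - 2 * K) / (3 * K)) - 1 / 2) ^ 2
    + (9 * K / 2) * (Int.fract (u / (3 * K)) - 1 / 2) ^ 2

/-- The real number `x` reduced modulo `y`, i.e. `x − y⌊x/y⌋`. -/
noncomputable def rmod (x y : ℝ) : ℝ := x - y * ⌊x / y⌋

open Set

/-- `(fract y - 1/2)^2` takes the same value at both ends of a period, so the quadratic
formula valid on `[n, n + 1)` persists on the closed interval. -/
lemma sq_fract_div_sub_half_of_mem_Icc {p x : ℝ} (hp : 0 < p) (n : ℤ)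
    (hx : x ∈ Icc (n * p) ((n + 1) * p)) :
    (Int.fract (x / p) - 1 / 2) ^ 2 = (x / p - n - 1 / 2) ^ 2 := by
  have hn : (n : ℝ) ≤ x / p := (le_div_iff₀ hp).2 hx.1
  rcases ((div_le_iff₀ hp).2 hx.2).lt_or_eq with hlt | heq
  · rw [show Int.fract (x / p) = x / p - n from
      Int.fract_eq_iff.2 ⟨by linarith, by linarith, n, by ring⟩]
  · rw [heq, ← Int.cast_one, ← Int.cast_add, Int.fract_intCast]
    push_cast
    ring

lemma rmod_mem_Ico {y : ℝ} (hy : 0 < y) (x : ℝ) : rmod x y ∈ Ico 0 y := by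
  rw [rmod, mul_comm]
  exact ⟨Int.sub_floor_div_mul_nonneg x hy, Int.sub_floor_div_mul_lt x hy⟩

lemma add_three_mul_div_three_mul {K : ℝ} (hK : K ≠ 0) (x : ℝ) :
    (x + 3 * K) / (3 * K) = x / (3 * K) + (1 : ℤ) := by
  push_cast
  field_simp

lemma ctilde_periodic (K : ℝ) : Function.Periodic (ctilde K) (3 * K) := by
  intro u
  rcases eq_or_ne K 0 with rfl | hK
  · simp [ctilde]
  simp only [ctilde, add_sub_right_comm u (3 * K), add_three_mul_div_three_mul hK,
    Int.fract_add_intCast]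

lemma stilde_periodic (K : ℝ) : Function.Periodic (stilde K) (3 * K) := by
  intro u
  rcases eq_or_ne K 0 with rfl | hK
  · simp [stilde]
  simp only [stilde, add_sub_right_comm u (3 * K), add_three_mul_div_three_mul hK,
    Int.fract_add_intCast]

section Pieces

variable {K u : ℝ}

lemma ctilde_eq_K_sub_two_mul (hK : 0 < K) (hu : u ∈ Icc 0 K) : ctilde K u = K - 2 * u := by
  obtain ⟨h0, h1⟩ := hu
  have h3K : 0 < 3 * K := by positivity
  rw [ctilde, sq_fract_div_sub_half_of_mem_Icc h3K (-1) (by push_cast; constructor <;> linarith),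
    sq_fract_div_sub_half_of_mem_Icc h3K 0 (by push_cast; constructor <;> linarith)]
  field_simp
  push_cast
  ring

lemma ctilde_eq_sub_two_mul_K (hK : 0 < K) (hu : u ∈ Icc K (3 * K)) :
    ctilde K u = u - 2 * K := by
  obtain ⟨h0, h1⟩ := hu
  have h3K : 0 < 3 * K := by positivity
  rw [ctilde, sq_fract_div_sub_half_of_mem_Icc h3K 0 (by push_cast; constructor <;> linarith),
    sq_fract_div_sub_half_of_mem_Icc h3K 0 (by push_cast; constructor <;> linarith)]
  field_simp
  push_cast
  ring

lemma stilde_eq_K_sub (hK : 0 < K) (hu : u ∈ Icc 0 (2 * K)) : stilde K u = K - u := by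
  obtain ⟨h0, h1⟩ := hu
  have h3K : 0 < 3 * K := by positivity
  rw [stilde, sq_fract_div_sub_half_of_mem_Icc h3K (-1) (by push_cast; constructor <;> linarith),
    sq_fract_div_sub_half_of_mem_Icc h3K 0 (by push_cast; constructor <;> linarith)]
  field_simp
  push_cast
  ring

lemma stilde_eq_two_mul_sub_five_mul_K (hK : 0 < K) (hu : u ∈ Icc (2 * K) (3 * K)) :
    stilde K u = 2 * u - 5 * K := by
  obtain ⟨h0, h1⟩ := hu
  have h3K : 0 < 3 * K := by positivity
  rw [stilde, sq_fract_div_sub_half_of_mem_Icc h3K 0 (by push_cast; constructor <;> linarith),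
    sq_fract_div_sub_half_of_mem_Icc h3K 0 (by push_cast; constructor <;> linarith)]
  field_simp
  push_cast
  ring

lemma ctilde_eq_max (hK : 0 < K) (hu : u ∈ Icc 0 (3 * K)) :
    ctilde K u = max (K - 2 * u) (u - 2 * K) := by
  rcases le_total u K with h | h
  · rw [ctilde_eq_K_sub_two_mul hK ⟨hu.1, h⟩, max_eq_left (by linarith)]
  · rw [ctilde_eq_sub_two_mul_K hK ⟨h, hu.2⟩, max_eq_right (by linarith)]

lemma stilde_eq_max (hK : 0 < K) (hu : u ∈ Icc 0 (3 * K)) :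
    stilde K u = max (K - u) (2 * u - 5 * K) := by
  rcases le_total u (2 * K) with h | h
  · rw [stilde_eq_K_sub hK ⟨hu.1, h⟩, max_eq_left (by linarith)]
  · rw [stilde_eq_two_mul_sub_five_mul_K hK ⟨h, hu.2⟩, max_eq_right (by linarith)]

end Pieces

def AdditionFormulas (K u v : ℝ) : Prop :=
  ctilde K (u + v) =
      max (ctilde K u + 2 * stilde K v) (2 * stilde K u + ctilde K v)
        - max (ctilde K u + stilde K u) (ctilde K v + stilde K v) ∧
    stilde K (u + v) =
      max (stilde K u + 2 * ctilde K v) (2 * ctilde K u + stilde K v)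
        - max (ctilde K u + stilde K u) (ctilde K v + stilde K v)

namespace AdditionFormulas

variable {K u v : ℝ}

lemma comm : AdditionFormulas K u v ↔ AdditionFormulas K v u := by
  have swap (a b c d : ℝ) : max (a + 2 * b) (2 * c + d) = max (d + 2 * c) (2 * b + a) := by
    rw [max_comm, add_comm d, add_comm a]
  rw [AdditionFormulas, AdditionFormulas, add_comm v u, max_comm (ctilde K v + stilde K v),
    swap (ctilde K u), swap (stilde K u)]

lemma periodic (K u : ℝ) : Function.Periodic (AdditionFormulas K u) (3 * K) := by
  intro v
  simp only [AdditionFormulas, ← add_assoc, ctilde_periodic K _, stilde_periodic K _]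

lemma self_iff :
    AdditionFormulas K u u ↔ ctilde K (u + u) = stilde K u ∧ stilde K (u + u) = ctilde K u := by
  rw [AdditionFormulas, add_comm (ctilde K u) (2 * _), add_comm (stilde K u) (2 * _),
    max_self, max_self, max_self]
  ring_nf

lemma of_mem_Icc_zero_K (hK : 0 < K) (hu : u ∈ Icc 0 K) (hv : v ∈ Icc K (3 * K)) :
    AdditionFormulas K u v := by
  obtain ⟨hu0, huK⟩ := hu
  obtain ⟨hvK, hv3K⟩ := hv
  rw [AdditionFormulas, ctilde_eq_K_sub_two_mul hK ⟨hu0, huK⟩,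
    stilde_eq_K_sub hK ⟨hu0, by linarith⟩,
    ctilde_eq_max hK ⟨by linarith, hv3K⟩, stilde_eq_max hK ⟨by linarith, hv3K⟩]
  rcases le_total (u + v) (3 * K) with h | h
  · rw [ctilde_eq_max hK ⟨by linarith, h⟩, stilde_eq_max hK ⟨by linarith, h⟩]
    constructor <;> simp only [max_def] <;> split_ifs <;> linarith
  · rw [← (ctilde_periodic K).sub_eq (u + v), ← (stilde_periodic K).sub_eq (u + v),
      ctilde_eq_max hK ⟨by linarith, by linarith⟩,
      stilde_eq_max hK ⟨by linarith, by linarith⟩]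
    constructor <;> simp only [max_def] <;> split_ifs <;> linarith

lemma of_mem_Icc_K_two_mul_K (hK : 0 < K) (hu : u ∈ Icc K (2 * K))
    (hv : v ∈ Icc (2 * K) (3 * K)) :
    AdditionFormulas K u v := by
  obtain ⟨huK, hu2K⟩ := hu
  obtain ⟨hv2K, hv3K⟩ := hv
  rw [AdditionFormulas, ctilde_eq_sub_two_mul_K hK ⟨huK, by linarith⟩,
    stilde_eq_K_sub hK ⟨by linarith, hu2K⟩,
    ctilde_eq_max hK ⟨by linarith, hv3K⟩, stilde_eq_max hK ⟨by linarith, hv3K⟩,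
    ← (ctilde_periodic K).sub_eq (u + v), ← (stilde_periodic K).sub_eq (u + v),
    ctilde_eq_max hK ⟨by linarith, by linarith⟩,
    stilde_eq_max hK ⟨by linarith, by linarith⟩]
  constructor <;> simp only [max_def] <;> split_ifs <;> linarith

lemma not_self_of_mem_Ioo (hK : 0 < K) {j : ℕ} (hj : j = 1 ∨ j = 2 ∨ j = 3)
    (hu : u ∈ Ioo (((j : ℝ) - 1) * K) (j * K)) : ¬ AdditionFormulas K u u := by
  rw [self_iff]
  rintro ⟨hc, hs⟩
  obtain ⟨h0, h1⟩ := hu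
  rcases hj with rfl | rfl | rfl <;> norm_num at h0 h1
  · rw [ctilde_eq_max hK ⟨by linarith, by linarith⟩,
      stilde_eq_K_sub hK ⟨by linarith, by linarith⟩] at hc
    exact (max_lt (by linarith) (by linarith)).ne hc
  · rw [stilde_eq_K_sub hK ⟨by linarith, by linarith⟩] at hc
    rcases le_total (u + u) (3 * K) with h | h
    · rw [ctilde_eq_max hK ⟨by linarith, h⟩] at hc
      exact (lt_max_of_lt_right (by linarith)).ne' hc
    · rw [← (ctilde_periodic K).sub_eq, ctilde_eq_max hK ⟨by linarith, by linarith⟩] at hc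
      exact (lt_max_of_lt_left (by linarith)).ne' hc
  · rw [← (stilde_periodic K).sub_eq, stilde_eq_max hK ⟨by linarith, by linarith⟩,
      ctilde_eq_sub_two_mul_K hK ⟨by linarith, by linarith⟩] at hs
    exact (max_lt (by linarith) (by linarith)).ne hs

lemma of_mem_Icc (hK : 0 < K) {j : ℕ} (hj : j = 1 ∨ j = 2 ∨ j = 3)
    (hu : u ∈ Icc (((j : ℝ) - 1) * K) (j * K)) {w : ℝ} (hw : w ∈ Icc 0 (2 * K)) :
    AdditionFormulas K u (j * K + w) := by
  obtain ⟨hu0, hu1⟩ := hu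
  obtain ⟨hw0, hw1⟩ := hw
  rcases hj with rfl | rfl | rfl <;> norm_num at hu0 hu1 ⊢
  · exact of_mem_Icc_zero_K hK ⟨hu0, hu1⟩ ⟨by linarith, by linarith⟩
  · rcases le_total w K with h | h
    · exact of_mem_Icc_K_two_mul_K hK ⟨hu0, hu1⟩ ⟨by linarith, by linarith⟩
    · rw [← (periodic K u).sub_eq, comm]
      exact of_mem_Icc_zero_K hK ⟨by linarith, by linarith⟩ ⟨by linarith, by linarith⟩
  · rw [← (periodic K u).sub_eq, comm]
    rcases le_total w K with h | h
    · exact of_mem_Icc_zero_K hK ⟨by linarith, by linarith⟩ ⟨by linarith, by linarith⟩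
    · exact of_mem_Icc_K_two_mul_K hK ⟨by linarith, by linarith⟩ ⟨by linarith, by linarith⟩

end AdditionFormulas

/-- Third pair of ultradiscrete addition formulae: valid on `[(j−1)K, jK]`
exactly when `v` lies in the closure of `D_{j+1} ∪ D_{j+2}` modulo `3K`. -/
theorem ultradiscrete_addition_third_pair (K : ℝ) (hK : 0 < K)
    (j : ℕ) (hj : j = 1 ∨ j = 2 ∨ j = 3) (v : ℝ) :
    (∀ u ∈ Set.Icc (((j : ℝ) - 1) * K) ((j : ℝ) * K),
      ctilde K (u + v) =
        max (ctilde K u + 2 * stilde K v) (2 * stilde K u + ctilde K v)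
          - max (ctilde K u + stilde K u) (ctilde K v + stilde K v) ∧
      stilde K (u + v) =
        max (stilde K u + 2 * ctilde K v) (2 * ctilde K u + stilde K v)
          - max (ctilde K u + stilde K u) (ctilde K v + stilde K v))
    ↔ rmod (v - (j : ℝ) * K) (3 * K) ∈ Set.Icc 0 (2 * K) := by
  change (∀ u ∈ _, AdditionFormulas K u v) ↔ _
  set w := rmod (v - j * K) (3 * K) with hw_def
  have hw : w ∈ Ico 0 (3 * K) := rmod_mem_Ico (by positivity) _
  have hv : v = j * K + w + ⌊(v - j * K) / (3 * K)⌋ * (3 * K) := by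
    rw [hw_def, rmod]
    ring
  have hshift (u : ℝ) : AdditionFormulas K u v ↔ AdditionFormulas K u (j * K + w) := by
    rw [hv, (AdditionFormulas.periodic K u).int_mul _ _]
  simp only [hshift]
  refine ⟨fun h => ?_, fun hw2 u hu => AdditionFormulas.of_mem_Icc hK hj hu hw2⟩
  refine ⟨hw.1, not_lt.1 fun hw2 => ?_⟩
  have hu : j * K + w - 3 * K ∈ Ioo (((j : ℝ) - 1) * K) (j * K) :=
    ⟨by linarith, by linarith [hw.2]⟩
  refine AdditionFormulas.not_self_of_mem_Ioo hK hj hu ?_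
  rw [(AdditionFormulas.periodic K _).sub_eq]
  exact h _ (Ioo_subset_Icc_self hu)
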